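/- Let ω be a Borel probability measure on ℝ with ∫_ℝ |λ|^α dω(λ) < ∞ for some α > 1, and set P(t) := |∫_ℝ e^{−iλt} dω(λ)|². Then the one-sided derivative of P at 0 exists and equals 0, i.e. lim_{t→0+} (P(t) − 1)/t = 0. -/

import Mathlib

/-!
The amplitude `∫ e^{-iλt} dω` is the characteristic function `φ` of `ω` at `-t`. With
`γ = min α 2 ∈ (1, 2]`, the elementary bound `1 - cos x ≤ 2|x|^γ` gives
`1 - Re φ(t) ≤ 2|t|^γ ∫|λ|^γ dω`, and since `|φ| ≤ 1`, `1 - |φ|² ≤ 2(1 - Re φ)`.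
Hence `0 ≤ 1 - P(t) = O(t^γ)`, which is `o(t)` because `γ > 1`.
-/

open MeasureTheory Filter Topology

lemma one_sub_cos_le_two_mul_abs_rpow {γ : ℝ} (hγ₀ : 0 ≤ γ) (hγ₂ : γ ≤ 2) (x : ℝ) :
    1 - Real.cos x ≤ 2 * |x| ^ γ := by
  rcases le_or_gt |x| 1 with hx | hx
  · have hsq : x ^ 2 ≤ |x| ^ γ := by
      rw [← sq_abs, ← Real.rpow_two]
      exact Real.rpow_le_rpow_of_exponent_ge' (abs_nonneg x) hx hγ₀ hγ₂
    nlinarith [Real.one_sub_sq_div_two_le_cos (x := x), Real.rpow_nonneg (abs_nonneg x) γ]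
  · nlinarith [Real.neg_one_le_cos x, Real.one_le_rpow hx.le hγ₀]

lemma re_charFun_eq_integral_cos {μ : Measure ℝ} [IsFiniteMeasure μ] (t : ℝ) :
    (charFun μ t).re = ∫ x, Real.cos (t * x) ∂μ := by
  rw [charFun_apply_real, ← RCLike.re_to_complex, ← integral_re]
  · simp [Complex.exp_re, ← Complex.ofReal_mul]
  · exact (integrable_const (1 : ℝ)).mono' (by fun_prop) (by simp [Complex.norm_exp])

lemma one_sub_re_charFun_le {μ : Measure ℝ} [IsProbabilityMeasure μ] {γ : ℝ} (hγ₀ : 0 ≤ γ)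
    (hγ₂ : γ ≤ 2) (hmom : Integrable (fun x => |x| ^ γ) μ) (t : ℝ) :
    1 - (charFun μ t).re ≤ 2 * |t| ^ γ * ∫ x, |x| ^ γ ∂μ := by
  have hcos : Integrable (fun x => Real.cos (t * x)) μ :=
    (integrable_const 1).mono' (by fun_prop) (by simp [Real.abs_cos_le_one])
  calc 1 - (charFun μ t).re = ∫ x, (1 - Real.cos (t * x)) ∂μ := by
        rw [re_charFun_eq_integral_cos, integral_sub (integrable_const 1) hcos]; simp
    _ ≤ ∫ x, 2 * |t| ^ γ * |x| ^ γ ∂μ := by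
        refine integral_mono ((integrable_const 1).sub hcos) (hmom.const_mul _) fun x => ?_
        calc 1 - Real.cos (t * x) ≤ 2 * |t * x| ^ γ := one_sub_cos_le_two_mul_abs_rpow hγ₀ hγ₂ _
          _ = 2 * |t| ^ γ * |x| ^ γ := by
            rw [abs_mul, Real.mul_rpow (abs_nonneg t) (abs_nonneg x), mul_assoc]
    _ = 2 * |t| ^ γ * ∫ x, |x| ^ γ ∂μ := integral_const_mul _ _

lemma one_sub_sq_norm_le_two_mul_one_sub_re {z : ℂ} (hz : ‖z‖ ≤ 1) :
    1 - ‖z‖ ^ 2 ≤ 2 * (1 - z.re) := by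
  have hre : |z.re| ≤ 1 := (Complex.abs_re_le_norm z).trans hz
  rw [Complex.sq_norm, Complex.normSq_apply]
  nlinarith [abs_le.mp hre, sq_nonneg z.im]

lemma tendsto_div_nhdsGT_zero_of_abs_le_rpow {f : ℝ → ℝ} {C γ : ℝ} (hγ : 1 < γ)
    (hf : ∀ t > 0, |f t| ≤ C * t ^ γ) :
    Tendsto (fun t => f t / t) (𝓝[>] 0) (𝓝 0) := by
  have hlim : Tendsto (fun t : ℝ => C * t ^ (γ - 1)) (𝓝[>] 0) (𝓝 0) := by
    have := ((Real.continuousAt_rpow_const 0 (γ - 1) (Or.inr (by linarith))).tendsto.const_mul C)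
    simpa [Real.zero_rpow (by linarith : γ - 1 ≠ 0)] using this.mono_left nhdsWithin_le_nhds
  refine squeeze_zero_norm' ?_ hlim
  filter_upwards [self_mem_nhdsWithin] with t (ht : 0 < t)
  rw [Real.norm_eq_abs, abs_div, abs_of_pos ht, div_le_iff₀ ht, Real.rpow_sub_one ht.ne', mul_assoc,
    div_mul_cancel₀ _ ht.ne']
  exact hf t ht

lemma one_sub_sq_norm_charFun_le {μ : Measure ℝ} [IsProbabilityMeasure μ] {γ : ℝ} (hγ₀ : 0 ≤ γ)
    (hγ₂ : γ ≤ 2) (hmom : Integrable (fun x => |x| ^ γ) μ) (t : ℝ) :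
    1 - ‖charFun μ t‖ ^ 2 ≤ 4 * |t| ^ γ * ∫ x, |x| ^ γ ∂μ :=
  calc 1 - ‖charFun μ t‖ ^ 2 ≤ 2 * (1 - (charFun μ t).re) :=
        one_sub_sq_norm_le_two_mul_one_sub_re (norm_charFun_le_one t)
    _ ≤ 2 * (2 * |t| ^ γ * ∫ x, |x| ^ γ ∂μ) := by
        gcongr; exact one_sub_re_charFun_le hγ₀ hγ₂ hmom t
    _ = 4 * |t| ^ γ * ∫ x, |x| ^ γ ∂μ := by ring

/-- Vanishing initial decay rate under a finite α-moment with α > 1. -/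
theorem initial_decay_rate_zero (ω : Measure ℝ) [IsProbabilityMeasure ω]
    (α : ℝ) (hα : 1 < α)
    (hmom : Integrable (fun lam : ℝ => |lam| ^ α) ω)
    (P : ℝ → ℝ)
    (hP : ∀ t : ℝ, P t = ‖∫ lam : ℝ, Complex.exp (-Complex.I * lam * t) ∂ω‖ ^ 2) :
    Tendsto (fun t => (P t - 1) / t) (nhdsWithin 0 (Set.Ioi 0)) (nhds 0) := by
  set γ := min α 2
  have hγ₀ : 0 ≤ γ := le_min (by linarith) zero_le_two
  have hmomγ : Integrable (fun x => |x| ^ γ) ω :=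
    integrable_norm_rpow_of_le (f := id) aestronglyMeasurable_id hγ₀ (by linarith)
      (min_le_left α 2) hmom
  have hP_charFun (t : ℝ) : P t = ‖charFun ω (-t)‖ ^ 2 := by
    rw [hP, charFun_apply_real]
    congr 3 with x
    push_cast
    ring_nf
  refine tendsto_div_nhdsGT_zero_of_abs_le_rpow (C := 4 * ∫ x, |x| ^ γ ∂ω)
    (lt_min hα one_lt_two) fun t ht => ?_
  have hnorm := norm_charFun_le_one (μ := ω) (-t)
  rw [hP_charFun, abs_sub_comm, abs_of_nonneg (by nlinarith [norm_nonneg (charFun ω (-t))])]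
  have hbound := one_sub_sq_norm_charFun_le hγ₀ (min_le_right α 2) hmomγ (-t)
  rw [abs_neg, abs_of_pos ht] at hbound
  linarith
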